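/- Let q ≥ 1 and k ≥ 1. For indices i₁, …, i_{2k} ∈ {0, 1, …, q}, the ((0,…,0),(0,…,0)) entry of the product B_{i₁} E B_{i₂} B_{i₃} E B_{i₄} ⋯ B_{i_{2k−1}} E B_{i_{2k}} in M_{2^q}(ℂ) (equivalently, the value of the functional η^{⊗q} on this product, where η picks the upper-left entry of a 2×2 matrix) equals 1 if i₁ = 0, i_{2k} = 0, and i_{2r} = i_{2r+1} for every r = 1, …, k−1, and equals 0 otherwise. -/

import Mathlib

open Matrix BigOperators

/-- The 2×2 flip matrix `J = [[0,1],[1,0]]`. -/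
noncomputable def J2 : Matrix (Fin 2) (Fin 2) ℂ := !![0, 1; 1, 0]

/-- The 2×2 matrix unit `E₁₁ = [[1,0],[0,0]]`. -/
noncomputable def E11 : Matrix (Fin 2) (Fin 2) ℂ := !![1, 0; 0, 0]

/-- `Bq q i` for `i = 1,…,q` is the Kronecker product with `J` in the `i`-th tensor factor and
the identity elsewhere; `Bq q 0` is the identity of `M_{2^q}(ℂ)`.  Here `M_{2^q}(ℂ)` is realized
as matrices indexed by `Fin q → Fin 2`, and the Kronecker product entrywise is the product of the
entries of the factors. -/
noncomputable def Bq (q : ℕ) (i : Fin (q + 1)) :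
    Matrix (Fin q → Fin 2) (Fin q → Fin 2) ℂ :=
  Matrix.of fun s t => ∏ j : Fin q,
    (if ((j : ℕ) + 1 = (i : ℕ)) then J2 else (1 : Matrix (Fin 2) (Fin 2) ℂ)) (s j) (t j)

/-- `Etens q = E₁₁^{⊗q}`. -/
noncomputable def Etens (q : ℕ) : Matrix (Fin q → Fin 2) (Fin q → Fin 2) ℂ :=
  Matrix.of fun s t => ∏ j : Fin q, E11 (s j) (t j)

/-!
Since `J E₁₁ = E₂₁` and `E₁₁ J = E₁₂`, factorwise each block `B_a E B_b` is the matrix unit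
`single (oneHot q a) (oneHot q b) 1`, where `oneHot q a ∈ {0,1}^q` has its only `1` in tensor
factor `a` (and is the zero word for `a = 0`). A product of matrix units
`single x₁ y₁ 1 ⋯ single x_k y_k 1` is `single x₁ y_k 1` if every `y_r = x_{r+1}`, and `0`
otherwise; as `oneHot q` is injective with `oneHot q 0 = 0`, its corner entry is the claimed
indicator.
-/

section PiKronecker

variable {ι n R : Type*} [Fintype ι] [CommSemiring R]

def piKronecker (M : ι → Matrix n n R) : Matrix (ι → n) (ι → n) R :=
  of fun s t => ∏ j, M j (s j) (t j)

theorem piKronecker_mul [DecidableEq ι] [Fintype n] (M N : ι → Matrix n n R) :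
    piKronecker M * piKronecker N = piKronecker fun j => M j * N j := by
  ext s t
  simp only [piKronecker, mul_apply, of_apply, Finset.prod_univ_sum, Fintype.piFinset_univ,
    Finset.prod_mul_distrib]

theorem piKronecker_single_one [DecidableEq n] (x y : ι → n) :
    piKronecker (fun j => single (x j) (y j) (1 : R)) = single x y 1 := by
  ext s t
  simp only [piKronecker, single, of_apply, Finset.prod_ite_zero, Finset.prod_const_one,
    funext_iff, Finset.mem_univ, true_implies, forall_and]

end PiKronecker

theorem prod_ofFn_single_one {n R : Type*} [Fintype n] [DecidableEq n] [Semiring R]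
    (k : ℕ) (x y : ℕ → n) :
    (List.ofFn fun r : Fin (k + 1) => single (x r) (y r) (1 : R)).prod =
      if ∀ r < k, y r = x (r + 1) then single (x 0) (y k) 1 else 0 := by
  induction k generalizing x y with
  | zero => simp
  | succ k ih =>
    rw [List.ofFn_succ, List.prod_cons]
    simp only [Fin.val_succ, Fin.val_zero]
    rw [ih (fun r => x (r + 1)) (fun r => y (r + 1))]
    simp only [Nat.forall_lt_succ_left, zero_add]
    by_cases hlink : y 0 = x 1 <;> simp [hlink]

theorem flip_mul_E11_mul_flip (c d : Prop) [Decidable c] [Decidable d] :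
    (if c then J2 else 1) * E11 * (if d then J2 else 1) =
      single (if c then 1 else 0) (if d then 1 else 0) 1 := by
  ext x y
  split_ifs <;> fin_cases x <;> fin_cases y <;> simp [J2, E11, mul_apply, Fin.sum_univ_two]

def oneHot (q : ℕ) (a : Fin (q + 1)) : Fin q → Fin 2 :=
  fun j => if (j : ℕ) + 1 = a then 1 else 0

theorem oneHot_zero (q : ℕ) : oneHot q 0 = fun _ => 0 := by
  funext j
  simp [oneHot]

theorem oneHot_injective (q : ℕ) : Function.Injective (oneHot q) := by
  have key : ∀ a b : Fin (q + 1), (b : ℕ) ≠ 0 → oneHot q a = oneHot q b → a = b := by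
    intro a b hb h
    have := congrFun h ⟨b - 1, by omega⟩
    simp only [oneHot, Nat.sub_add_cancel (Nat.pos_of_ne_zero hb), if_true] at this
    split_ifs at this with ha
    · exact Fin.ext ha.symm
    · exact absurd this (by decide)
  intro a b h
  by_cases hb : (b : ℕ) = 0
  · by_cases ha : (a : ℕ) = 0
    · exact Fin.ext (ha.trans hb.symm)
    · exact (key b a ha h.symm).symm
  · exact key a b hb h

theorem Bq_mul_Etens_mul_Bq (q : ℕ) (a b : Fin (q + 1)) :
    Bq q a * Etens q * Bq q b = single (oneHot q a) (oneHot q b) 1 := by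
  change piKronecker _ * piKronecker (fun _ => E11) * piKronecker _ = _
  simp only [piKronecker_mul, flip_mul_E11_mul_flip]
  exact piKronecker_single_one _ _

open scoped Classical in
theorem corner_entry_of_alternating_product_general (q k : ℕ) (hk : 1 ≤ k)
    (i : ℕ → Fin (q + 1)) :
    ((List.ofFn fun r : Fin k =>
        Bq q (i (2 * (r : ℕ) + 1)) * Etens q * Bq q (i (2 * (r : ℕ) + 2))).prod)
      (fun _ => 0) (fun _ => 0)
    = if (i 1 = 0 ∧ i (2 * k) = 0 ∧ ∀ r ∈ Finset.Icc 1 (k - 1), i (2 * r) = i (2 * r + 1))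
      then 1 else 0 := by
  obtain ⟨k, rfl⟩ := Nat.exists_eq_add_of_le' hk
  simp only [Bq_mul_Etens_mul_Bq]
  rw [prod_ofFn_single_one k (fun r => oneHot q (i (2 * r + 1)))
    (fun r => oneHot q (i (2 * r + 2)))]
  have hlinks : (∀ r < k, i (2 * r + 2) = i (2 * r + 2 + 1)) ↔
      ∀ r ∈ Finset.Icc 1 (k + 1 - 1), i (2 * r) = i (2 * r + 1) := by
    simp only [Nat.add_sub_cancel, Finset.mem_Icc]
    constructor
    · rintro h r ⟨hr, hrk⟩
      obtain ⟨r, rfl⟩ := Nat.exists_eq_add_of_le' hr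
      exact h r (by omega)
    · intro h r hr
      exact h (r + 1) ⟨by omega, by omega⟩
  rw [← oneHot_zero q]
  simp only [apply_ite (fun M : Matrix _ _ ℂ => M (oneHot q 0) (oneHot q 0)), single_apply,
    Matrix.zero_apply, (oneHot_injective q).eq_iff, mul_add_one, mul_zero, zero_add, hlinks]
  split_ifs <;> tauto

open scoped Classical in
/-- The `((0,…,0),(0,…,0))` entry of `B_{i₁} E B_{i₂} B_{i₃} E B_{i₄} ⋯ B_{i_{2k−1}} E B_{i_{2k}}`
(equivalently the value of `η^{⊗q}` on this product, where `η` picks the upper-left entry of a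
2×2 matrix) equals `1` if `i₁ = 0`, `i_{2k} = 0` and `i_{2r} = i_{2r+1}` for every
`r = 1,…,k−1`, and equals `0` otherwise. -/
theorem corner_entry_of_alternating_product (q k : ℕ) (hq : 1 ≤ q) (hk : 1 ≤ k)
    (i : ℕ → Fin (q + 1)) :
    ((List.ofFn fun r : Fin k =>
        Bq q (i (2 * (r : ℕ) + 1)) * Etens q * Bq q (i (2 * (r : ℕ) + 2))).prod)
      (fun _ => 0) (fun _ => 0)
    = if (i 1 = 0 ∧ i (2 * k) = 0 ∧ ∀ r ∈ Finset.Icc 1 (k - 1), i (2 * r) = i (2 * r + 1))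
      then 1 else 0 :=
  corner_entry_of_alternating_product_general q k hk i
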